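/- Let T > 0, ε ≥ 0, c̄ > 0 and K > 0. Let c, Φ : ℝ³×[0,T] → ℝ and v, n : ℝ³×[0,T] → ℝ³ be smooth and 2π-periodic in the space variables, with div v = 0, 0 ≤ c ≤ c̄ and |n| ≤ 1 pointwise, sup_{t∈[0,T]} (∫_Q |∇Φ(x,t)|² dx)^{1/2} ≤ K, and satisfying ∂_t c + v·∇c = div((Id + ε n⊗n)(∇c + c∇Φ)) on ℝ³×[0,T]. Then ∫₀ᵀ ∫_Q |∇c|² dx dt ≤ ∫_Q c(x,0)² dx + (1+ε)² c̄² K² T. -/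

import Mathlib

noncomputable section
open MeasureTheory Real

/-- Vectors in `ℝ³`. -/
abbrev V3 : Type := Fin 3 → ℝ
/-- Real `3 × 3` matrices. -/
abbrev M3 : Type := Matrix (Fin 3) (Fin 3) ℝ

/-- The periodicity cell `Q = [-π, π]³`. -/
def Q3 : Set V3 := Set.Icc (fun _ => -Real.pi) (fun _ => Real.pi)

/-- Euclidean inner product on `ℝ³`. -/
def dot (a b : V3) : ℝ := ∑ i, a i * b i

/-- Frobenius inner product `A : B = ∑_{i,j} A_{ij} B_{ij}`. -/
def mdot (A B : M3) : ℝ := ∑ i, ∑ j, A i j * B i j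

/-- Tensor product `(a ⊗ b)_{ij} = a_i b_j`. -/
def outer (a b : V3) : M3 := Matrix.of fun i j => a i * b j

/-- Matrix-vector product. -/
def mv (A : M3) (x : V3) : V3 := A.mulVec x

/-- Partial derivative `∂_i f` of a scalar field. -/
def pd (i : Fin 3) (f : V3 → ℝ) (x : V3) : ℝ := fderiv ℝ f x (Pi.single i 1)

/-- Spatial gradient of a scalar field. -/
def grad (f : V3 → ℝ) (x : V3) : V3 := fun i => pd i f x

/-- Divergence of a vector field. -/
def divg (w : V3 → V3) (x : V3) : ℝ := ∑ i, pd i (fun y => w y i) x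

/-- Divergence of a matrix field, `(div A)_i = ∑_j ∂_j A_{ij}`. -/
def divM (A : V3 → M3) (x : V3) : V3 := fun i => ∑ j, pd j (fun y => A y i j) x

/-- Laplacian of a scalar field. -/
def lap (f : V3 → ℝ) (x : V3) : ℝ := ∑ i, pd i (fun y => pd i f y) x

/-- Componentwise Laplacian of a vector field. -/
def lapV (w : V3 → V3) (x : V3) : V3 := fun k => lap (fun y => w y k) x

/-- Gradient matrix `(∇w)_{ij} = ∂_j w_i`. -/
def gradM (w : V3 → V3) (x : V3) : M3 := Matrix.of fun i j => pd j (fun y => w y i) x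

/-- Symmetric part `D(v) = ½(∇v + ∇vᵀ)` of the velocity gradient. -/
def Dv (w : V3 → V3) (x : V3) : M3 := (1/2 : ℝ) • (gradM w x + (gradM w x).transpose)

/-- Antisymmetric part `Ω(v) = ½(∇v − ∇vᵀ)` of the velocity gradient. -/
def Ov (w : V3 → V3) (x : V3) : M3 := (1/2 : ℝ) • (gradM w x - (gradM w x).transpose)

/-- `(∇n ⊙ ∇n)_{ij} = ∑_k ∂_i n_k ∂_j n_k`. -/
def odotM (w : V3 → V3) (x : V3) : M3 :=
  Matrix.of fun i j => ∑ k, pd i (fun y => w y k) x * pd j (fun y => w y k) x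

/-- `|∇w|² = ∑_{i,k} (∂_i w_k)²`. -/
def gnorm2 (w : V3 → V3) (x : V3) : ℝ := ∑ i, ∑ k, (pd i (fun y => w y k) x)^2

/-- `2π`-periodicity in the space variables. -/
def Per {α : Type*} (f : V3 → α) : Prop :=
  ∀ (x : V3) (i : Fin 3), f (x + Pi.single i (2 * Real.pi)) = f x

/-- The dielectric matrix `Id + ε n ⊗ n`. -/
def matA (ε : ℝ) (n : V3) : M3 := 1 + ε • outer n n

/-- The singular configuration potential `F(r) = (1 − r) log(1 − r)`. -/
def Fpot (r : ℝ) : ℝ := (1 - r) * Real.log (1 - r)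

/-- Its derivative `F'(r) = −log(1 − r) − 1`. -/
def Fpot' (r : ℝ) : ℝ := -Real.log (1 - r) - 1

/-- The corotational (Lie) derivative `n̊ = ∂_t n + v·∇n − Ω(v) n`. -/
def ringD (v n : V3 → ℝ → V3) (x : V3) (t : ℝ) : V3 :=
  (fun k => deriv (fun s => n x s k) t)
    + (fun k => dot (v x t) (grad (fun y => n y t k) x))
    - mv (Ov (fun y => v y t) x) (n x t)

/-! ### Auxiliary lemmas -/

section Aux

open Function

lemma contDiff_slice {E : Type*} [NormedAddCommGroup E] [NormedSpace ℝ E]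
    {F : V3 → ℝ → E} (h : ContDiff ℝ (⊤ : ℕ∞) (uncurry F)) (t : ℝ) :
    ContDiff ℝ (⊤ : ℕ∞) (fun y => F y t) :=
  h.comp (contDiff_id.prodMk contDiff_const)

lemma contDiff_pd {f : V3 → ℝ} (hf : ContDiff ℝ (⊤ : ℕ∞) f) (i : Fin 3) :
    ContDiff ℝ (⊤ : ℕ∞) (pd i f) :=
  (hf.fderiv_right (by simp)).clm_apply contDiff_const

lemma pd_proj {w : V3 → V3} {x : V3} (hw : DifferentiableAt ℝ w x) (i k : Fin 3) :
    pd i (fun y => w y k) x = fderiv ℝ w x (Pi.single i 1) k := by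
  have h : HasFDerivAt (fun y => w y k)
      ((ContinuousLinearMap.proj k).comp (fderiv ℝ w x)) x := by
    exact
      (ContinuousLinearMap.proj k).hasFDerivAt.comp x hw.hasFDerivAt
  simp [pd, h.fderiv]

lemma pd_mul {f g : V3 → ℝ} {x : V3} (hf : DifferentiableAt ℝ f x)
    (hg : DifferentiableAt ℝ g x) (i : Fin 3) :
    pd i (fun y => f y * g y) x = pd i f x * g x + f x * pd i g x := by
  simp only [pd, fderiv_fun_mul hf hg, ContinuousLinearMap.add_apply,
    ContinuousLinearMap.smul_apply, smul_eq_mul]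
  ring

lemma pd_per {f : V3 → ℝ} (hf : Differentiable ℝ f) (hfp : Per f) (i j : Fin 3) (x : V3) :
    pd j f (x + Pi.single i (2 * Real.pi)) = pd j f x := by
  set p : V3 := Pi.single i (2 * Real.pi) with hp
  have h1 : HasFDerivAt (fun y => f (y + p)) (fderiv ℝ f (x + p)) x := by
    have := (hf (x + p)).hasFDerivAt.comp x ((hasFDerivAt_id x).add_const p)
    simpa [Function.comp_def] using this
  have h2 : (fun y : V3 => f (y + p)) = f := funext fun y => hfp y i
  rw [h2] at h1
  simp [pd, h1.fderiv]

/-- The shift by `2π` in direction `i` maps the back face to the front face. -/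
lemma insertNth_shift (i : Fin 3) (y : Fin 2 → ℝ) :
    (Fin.insertNth i (-Real.pi) y : V3) + Pi.single i (2 * Real.pi)
      = Fin.insertNth i Real.pi y := by
  funext j
  rcases eq_or_ne j i with rfl | hj
  · simp [Fin.insertNth_apply_same]
    ring
  · obtain ⟨k, rfl⟩ := Fin.exists_succAbove_eq hj
    simp [Fin.insertNth_apply_succAbove, Pi.single_eq_of_ne (Fin.succAbove_ne i k)]

/-- The divergence theorem on the periodic box: the integral of the divergence of a
smooth periodic vector field over `Q3` vanishes. -/
lemma integral_divg_zero (w : V3 → V3) (hw : ContDiff ℝ (⊤ : ℕ∞) w) (hwp : Per w) :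
    ∫ x in Q3, divg w x = 0 := by
  have hle : (fun _ : Fin 3 => -Real.pi) ≤ (fun _ : Fin 3 => Real.pi) :=
    fun _ => neg_le_self Real.pi_pos.le
  have hdiff : Differentiable ℝ w := hw.differentiable (by simp)
  have hcont : Continuous fun x : V3 => ∑ i, fderiv ℝ w x (Pi.single i 1) i := by
    refine continuous_finset_sum _ fun i _ => ?_
    exact (continuous_apply i).comp
      (((hw.fderiv_right (m := (⊤ : ℕ∞)) (by simp)).continuous).clm_apply continuous_const)
  have key := MeasureTheory.integral_divergence_of_hasFDerivAt_off_countable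
    (n := 2) (fun _ => -Real.pi) (fun _ => Real.pi) hle w (fun x => fderiv ℝ w x)
    ∅ Set.countable_empty hw.continuous.continuousOn
    (fun x _ => (hdiff x).hasFDerivAt)
    (hcont.integrableOn_Icc)
  have hQ : (Set.Icc (fun _ : Fin 3 => -Real.pi) (fun _ : Fin 3 => Real.pi)) = Q3 := rfl
  rw [hQ] at key
  have hlhs : ∫ x in Q3, divg w x
      = ∫ x in Q3, ∑ i, fderiv ℝ w x (Pi.single i 1) i := by
    refine MeasureTheory.integral_congr_ae (Filter.Eventually.of_forall fun x => ?_)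
    simp only [divg]
    exact Finset.sum_congr rfl fun i _ => pd_proj (hdiff x) i i
  rw [hlhs, key]
  refine Finset.sum_eq_zero fun i _ => ?_
  have : ∀ y : Fin 2 → ℝ, w (Fin.insertNth i Real.pi y) i
      = w (Fin.insertNth i (-Real.pi) y) i := by
    intro y
    rw [← insertNth_shift i y, hwp]
  simp only [this, sub_self]

end Aux
section Aux2

open Function MeasureTheory

lemma contDiff_grad {f : V3 → ℝ} (hf : ContDiff ℝ (⊤ : ℕ∞) f) : ContDiff ℝ (⊤ : ℕ∞) (grad f) :=
  contDiff_pi.2 fun i => contDiff_pd hf i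

lemma grad_per {f : V3 → ℝ} (hf : Differentiable ℝ f) (hfp : Per f) : Per (grad f) :=
  fun x i => funext fun j => pd_per hf hfp i j x

/-- Integration by parts on the periodic box. -/
lemma integral_ibp (f : V3 → ℝ) (w : V3 → V3) (hf : ContDiff ℝ (⊤ : ℕ∞) f)
    (hw : ContDiff ℝ (⊤ : ℕ∞) w) (hfp : Per f) (hwp : Per w) :
    ∫ x in Q3, (f x * divg w x + dot (grad f x) (w x)) = 0 := by
  have hsm : ContDiff ℝ (⊤ : ℕ∞) (fun y => f y • w y) := hf.smul hw
  have hper : Per (fun y => f y • w y) := fun x i => by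
    simp only [hfp x i, hwp x i]
  have hkey := integral_divg_zero _ hsm hper
  have hptw : ∀ x, divg (fun y => f y • w y) x
      = f x * divg w x + dot (grad f x) (w x) := by
    intro x
    have hfd : DifferentiableAt ℝ f x := (hf.differentiable (by simp)).differentiableAt
    simp only [divg, dot, grad, Finset.mul_sum]
    rw [← Finset.sum_add_distrib]
    refine Finset.sum_congr rfl fun i _ => ?_
    have hwd : DifferentiableAt ℝ (fun y => w y i) x := by
      have h : HasFDerivAt (fun y => w y i)
          ((ContinuousLinearMap.proj i).comp (fderiv ℝ w x)) x := by
        simpa [Function.comp_def] using (ContinuousLinearMap.proj i).hasFDerivAt.comp x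
          ((hw.differentiable (by simp)) x).hasFDerivAt
      exact h.differentiableAt
    have h0 : pd i (fun y => (f y • w y) i) x = pd i (fun y => f y * w y i) x := rfl
    rw [h0, pd_mul hfd hwd]
    ring
  rw [← hkey]
  exact MeasureTheory.integral_congr_ae (Filter.Eventually.of_forall fun x => (hptw x).symm)

lemma dot_comm (a b : V3) : dot a b = dot b a :=
  Finset.sum_congr rfl fun i _ => mul_comm _ _

lemma dot_add_right (a b c : V3) : dot a (b + c) = dot a b + dot a c := by
  simp only [dot, Pi.add_apply, ← Finset.sum_add_distrib]
  exact Finset.sum_congr rfl fun i _ => by ring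

lemma dot_smul_right (a : V3) (r : ℝ) (b : V3) : dot a (r • b) = r * dot a b := by
  simp only [dot, Pi.smul_apply, smul_eq_mul, Finset.mul_sum]
  exact Finset.sum_congr rfl fun i _ => by ring

/-- `A u = u + ε (n·u) n` for the dielectric matrix, in inner-product form. -/
lemma dot_mv_matA (ε : ℝ) (n u g : V3) :
    dot g (mv (matA ε n) u) = dot g u + ε * dot n u * dot g n := by
  have hcomp : ∀ k, mv (matA ε n) u k = u k + ε * dot n u * n k := by
    intro k
    simp only [mv, matA, Matrix.add_mulVec, Matrix.one_mulVec, Matrix.smul_mulVec,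
      Pi.add_apply, Pi.smul_apply, smul_eq_mul]
    congr 1
    simp only [Matrix.mulVec, dotProduct, outer, Matrix.of_apply, dot, Finset.mul_sum]
    rw [Finset.sum_mul]
    exact Finset.sum_congr rfl fun j _ => by ring
  calc dot g (mv (matA ε n) u)
      = ∑ i, (g i * u i + ε * dot n u * (g i * n i)) := by
        simp only [dot, hcomp]
        exact Finset.sum_congr rfl fun i _ => by ring
    _ = (∑ i, g i * u i) + ε * dot n u * ∑ i, g i * n i := by
        rw [Finset.sum_add_distrib, ← Finset.mul_sum]
    _ = dot g u + ε * dot n u * dot g n := rfl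

lemma dot_nonneg' (a : V3) : 0 ≤ dot a a :=
  Finset.sum_nonneg fun i _ => mul_self_nonneg _

lemma dot_cs (a b : V3) : (dot a b) ^ 2 ≤ dot a a * dot b b := by
  have := Finset.sum_mul_sq_le_sq_mul_sq Finset.univ a b
  simpa [dot, sq] using this

lemma abs_dot_le (a b : V3) : |dot a b| ≤ Real.sqrt (dot a a) * Real.sqrt (dot b b) := by
  rw [← Real.sqrt_sq_eq_abs, ← Real.sqrt_mul (dot_nonneg' a)]
  exact Real.sqrt_le_sqrt (dot_cs a b)

/-- Pointwise coercivity estimate for the integrand. -/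
lemma pointwise_bound (ε cbar : ℝ) (hε : 0 ≤ ε) (g h n : V3) (cc : ℝ)
    (hcc : 0 ≤ cc) (hcc' : cc ≤ cbar) (hn : dot n n ≤ 1) :
    (1/2) * dot g g - (1/2) * (1+ε)^2 * cbar^2 * dot h h
      ≤ dot g (mv (matA ε n) (g + cc • h)) := by
  have hexp : dot g (mv (matA ε n) (g + cc • h))
      = dot g g + ε * (dot n g)^2
        + cc * (dot g h + ε * (dot n g) * (dot n h)) := by
    rw [dot_mv_matA, dot_add_right, dot_add_right, dot_smul_right, dot_smul_right,
      dot_comm g n]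
    ring
  set sg := Real.sqrt (dot g g) with hsgdef
  set sh := Real.sqrt (dot h h) with hshdef
  have hsg0 : 0 ≤ sg := Real.sqrt_nonneg _
  have hsh0 : 0 ≤ sh := Real.sqrt_nonneg _
  have hsg : sg ^ 2 = dot g g := Real.sq_sqrt (dot_nonneg' g)
  have hsh : sh ^ 2 = dot h h := Real.sq_sqrt (dot_nonneg' h)
  have hgh : |dot g h| ≤ sg * sh := abs_dot_le g h
  have hng2 : (dot n g) ^ 2 ≤ dot g g := by
    have := dot_cs n g
    nlinarith [dot_nonneg' g, dot_nonneg' n]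
  have hnh2 : (dot n h) ^ 2 ≤ dot h h := by
    have := dot_cs n h
    nlinarith [dot_nonneg' h, dot_nonneg' n]
  have hprod : |dot n g * dot n h| ≤ sg * sh := by
    have h1 : (dot n g * dot n h) ^ 2 ≤ (sg * sh) ^ 2 := by
      rw [mul_pow, mul_pow, hsg, hsh]
      exact mul_le_mul hng2 hnh2 (sq_nonneg _) (dot_nonneg' g)
    calc |dot n g * dot n h| = Real.sqrt ((dot n g * dot n h)^2) :=
          (Real.sqrt_sq_eq_abs _).symm
      _ ≤ Real.sqrt ((sg * sh)^2) := Real.sqrt_le_sqrt h1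
      _ = |sg * sh| := Real.sqrt_sq_eq_abs _
      _ = sg * sh := abs_of_nonneg (mul_nonneg hsg0 hsh0)
  have hlow : -(cbar * (1+ε) * (sg * sh))
      ≤ cc * (dot g h + ε * (dot n g) * (dot n h)) := by
    have h1 : -((1+ε) * (sg * sh)) ≤ dot g h + ε * (dot n g) * (dot n h) := by
      have a1 : -(sg*sh) ≤ dot g h := (abs_le.1 hgh).1
      have a2 : -(sg*sh) ≤ dot n g * dot n h := (abs_le.1 hprod).1
      nlinarith
    have h2 : |dot g h + ε * (dot n g) * (dot n h)| ≤ (1+ε) * (sg * sh) := by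
      have a1 := abs_le.1 hgh
      have a2 := abs_le.1 hprod
      rw [abs_le]
      constructor <;> nlinarith
    have := (abs_le.1 h2).1
    nlinarith [mul_nonneg hsg0 hsh0, abs_nonneg (dot g h + ε * (dot n g) * (dot n h)),
       neg_abs_le (dot g h + ε * (dot n g) * (dot n h)),
       mul_le_mul_of_nonneg_left (neg_abs_le (dot g h + ε * (dot n g) * (dot n h))) hcc]
  have hyoung2 : 2 * (sg * ((1+ε) * cbar * sh))
      ≤ dot g g + (1+ε)^2 * cbar^2 * dot h h := by
    calc 2 * (sg * ((1+ε) * cbar * sh)) ≤ sg^2 + ((1+ε) * cbar * sh)^2 := by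
          linarith [two_mul_le_add_sq sg ((1+ε) * cbar * sh)]
      _ = dot g g + (1+ε)^2 * cbar^2 * dot h h := by rw [← hsg, ← hsh]; ring
  rw [hexp]
  nlinarith [hlow, hyoung2, mul_nonneg hε (sq_nonneg (dot n g))]

end Aux2
section Aux3

open Function MeasureTheory Metric

lemma Q3_compact : IsCompact Q3 := isCompact_Icc

lemma Q3_meas : MeasurableSet Q3 := measurableSet_Icc

lemma Q3_finite : volume Q3 < ⊤ := Q3_compact.measure_lt_top

/-- Spatial partial derivative of a time slice, via the full derivative. -/
lemma pd_slice {F : V3 → ℝ → ℝ} (hF : ContDiff ℝ (⊤ : ℕ∞) (uncurry F)) (i : Fin 3) (x : V3) (t : ℝ) :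
    pd i (fun y => F y t) x = fderiv ℝ (uncurry F) (x, t) (Pi.single i 1, 0) := by
  have h : HasFDerivAt (fun y => F y t)
      ((fderiv ℝ (uncurry F) (x, t)).comp
        ((ContinuousLinearMap.id ℝ V3).prod 0)) x := by
    have hin : HasFDerivAt (fun y : V3 => (y, t))
        ((ContinuousLinearMap.id ℝ V3).prod 0) x :=
      (hasFDerivAt_id x).prodMk (hasFDerivAt_const t x)
    simpa [Function.comp_def] using
      ((hF.differentiable (by simp)) (x, t)).hasFDerivAt.comp x hin
  rw [pd, h.fderiv]
  simp

/-- Time derivative of a slice, via the full derivative. -/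
lemma hasDerivAt_slice {F : V3 → ℝ → ℝ} (hF : ContDiff ℝ (⊤ : ℕ∞) (uncurry F)) (x : V3) (t : ℝ) :
    HasDerivAt (fun s => F x s) (fderiv ℝ (uncurry F) (x, t) (0, 1)) t := by
  have hin : HasDerivAt (fun s : ℝ => ((x : V3), s)) ((0 : V3), (1 : ℝ)) t :=
    (hasDerivAt_const t x).prodMk (hasDerivAt_id t)
  simpa [Function.comp_def] using
    ((hF.differentiable (by simp)) (x, t)).hasFDerivAt.comp_hasDerivAt t hin

lemma deriv_slice {F : V3 → ℝ → ℝ} (hF : ContDiff ℝ (⊤ : ℕ∞) (uncurry F)) (x : V3) (t : ℝ) :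
    deriv (fun s => F x s) t = fderiv ℝ (uncurry F) (x, t) (0, 1) :=
  (hasDerivAt_slice hF x t).deriv

lemma cont_fderiv_apply {F : V3 → ℝ → ℝ} (hF : ContDiff ℝ (⊤ : ℕ∞) (uncurry F)) (v : V3 × ℝ) :
    Continuous fun p : V3 × ℝ => fderiv ℝ (uncurry F) p v :=
  (ContDiff.clm_apply (hF.fderiv_right (m := (⊤ : ℕ∞)) (by simp)) contDiff_const).continuous

/-- Continuity of a parametric integral over the compact box. -/
lemma cont_param (H : V3 × ℝ → ℝ) (hH : Continuous H) :
    Continuous fun t => ∫ x in Q3, H (x, t) := by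
  rw [continuous_iff_continuousAt]
  intro t₀
  obtain ⟨M, hM⟩ := (Q3_compact.prod (isCompact_Icc (a := t₀ - 1) (b := t₀ + 1))).exists_bound_of_continuousOn hH.continuousOn
  apply MeasureTheory.continuousAt_of_dominated (bound := fun _ => M)
  · exact Filter.Eventually.of_forall fun t =>
      (hH.comp (continuous_id.prodMk continuous_const)).aestronglyMeasurable
  · have hball : ∀ᶠ t in nhds t₀, t ∈ Set.Icc (t₀ - 1) (t₀ + 1) :=
      Filter.eventually_of_mem (Metric.ball_mem_nhds t₀ one_pos) fun t ht => by
        rw [Metric.mem_ball, Real.dist_eq] at ht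
        constructor <;> [linarith [abs_lt.1 ht]; linarith [abs_lt.1 ht]]
    refine hball.mono fun t ht => ?_
    rw [MeasureTheory.ae_restrict_iff' Q3_meas]
    exact Filter.Eventually.of_forall fun x hx => hM (x, t) ⟨hx, ht⟩
  · exact (integrableOn_const Q3_finite.ne)
  · exact Filter.Eventually.of_forall fun x =>
      (hH.comp (continuous_const.prodMk continuous_id)).continuousAt

/-- Differentiation of the energy under the integral sign. -/
lemma hasDerivAt_energy {c : V3 → ℝ → ℝ} (hc : ContDiff ℝ (⊤ : ℕ∞) (uncurry c)) (t₀ : ℝ) :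
    HasDerivAt (fun t => ∫ x in Q3, (c x t)^2)
      (∫ x in Q3, 2 * c x t₀ * fderiv ℝ (uncurry c) (x, t₀) (0, 1)) t₀ := by
  have hcont2 : Continuous fun p : V3 × ℝ => (c p.1 p.2)^2 := by
    have : Continuous (uncurry c) := hc.continuous
    exact (this.pow 2)
  have hcont' : Continuous fun p : V3 × ℝ => 2 * c p.1 p.2 * fderiv ℝ (uncurry c) p (0, 1) :=
    ((continuous_const.mul hc.continuous).mul (cont_fderiv_apply hc (0, 1)))
  obtain ⟨M, hM⟩ := (Q3_compact.prod (isCompact_Icc (a := t₀ - 1) (b := t₀ + 1))).exists_bound_of_continuousOn hcont'.continuousOn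
  have key := hasDerivAt_integral_of_dominated_loc_of_deriv_le
    (μ := volume.restrict Q3) (x₀ := t₀) (s := Metric.ball t₀ 1) (Metric.ball_mem_nhds t₀ one_pos)
    (F := fun t x => (c x t)^2)
    (F' := fun t x => 2 * c x t * fderiv ℝ (uncurry c) (x, t) (0, 1))
    (bound := fun _ => M) ?_ ?_ ?_ ?_ ?_ ?_
  · exact key.2
  · exact Filter.Eventually.of_forall fun t =>
      (hcont2.comp (continuous_id.prodMk continuous_const)).aestronglyMeasurable
  · exact (hcont2.comp (continuous_id.prodMk continuous_const)).integrableOn_Icc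
  · exact (hcont'.comp (continuous_id.prodMk continuous_const)).aestronglyMeasurable
  · rw [MeasureTheory.ae_restrict_iff' Q3_meas]
    refine Filter.Eventually.of_forall fun x hx => fun t ht => ?_
    have ht' : t ∈ Set.Icc (t₀ - 1) (t₀ + 1) := by
      rw [Metric.mem_ball, Real.dist_eq] at ht
      constructor <;> [linarith [abs_lt.1 ht]; linarith [abs_lt.1 ht]]
    exact hM (x, t) ⟨hx, ht'⟩
  · exact (integrableOn_const Q3_finite.ne)
  · refine Filter.Eventually.of_forall fun x => fun t _ => ?_
    have hs := hasDerivAt_slice hc x t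
    have := hs.pow 2
    simpa [Pi.pow_def, pow_one, mul_comm, mul_assoc, mul_left_comm] using this

end Aux3
section Aux4

open Function MeasureTheory

lemma mv_matA_apply (ε : ℝ) (n u : V3) (k : Fin 3) :
    mv (matA ε n) u k = u k + ε * dot n u * n k := by
  simp only [mv, matA, Matrix.add_mulVec, Matrix.one_mulVec, Matrix.smul_mulVec,
    Pi.add_apply, Pi.smul_apply, smul_eq_mul]
  congr 1
  simp only [Matrix.mulVec, dotProduct, outer, Matrix.of_apply, dot, Finset.mul_sum]
  rw [Finset.sum_mul]
  exact Finset.sum_congr rfl fun j _ => by ring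

lemma continuous_dot {a b : V3 → V3} (ha : Continuous a) (hb : Continuous b) :
    Continuous fun x => dot (a x) (b x) := by
  refine continuous_finset_sum _ fun i _ => ?_
  exact ((continuous_apply i).comp ha).mul ((continuous_apply i).comp hb)

end Aux4
set_option maxHeartbeats 1000000 in
/-- the parabolic regularity estimate for a charge density. If
`0 ≤ c ≤ c̄`, `|n| ≤ 1`, `sup_t ‖∇Φ(·,t)‖_{L²(Q)} ≤ K`, `div v = 0`, and
`∂_t c + v·∇c = div((Id + ε n⊗n)(∇c + c∇Φ))` on `ℝ³ × [0,T]`, then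
`∫₀ᵀ∫_Q |∇c|² ≤ ∫_Q c(x,0)² dx + (1+ε)² c̄² K² T`. -/
theorem stmt7 (T ε cbar K : ℝ) (hT : 0 < T) (hε : 0 ≤ ε) (hcbar : 0 < cbar) (hK : 0 < K)
    (c Φ : V3 → ℝ → ℝ) (v n : V3 → ℝ → V3)
    (hc : ContDiff ℝ (⊤ : ℕ∞) (Function.uncurry c)) (hΦ : ContDiff ℝ (⊤ : ℕ∞) (Function.uncurry Φ))
    (hv : ContDiff ℝ (⊤ : ℕ∞) (Function.uncurry v)) (hn : ContDiff ℝ (⊤ : ℕ∞) (Function.uncurry n))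
    (hcp : Per c) (hΦp : Per Φ) (hvp : Per v) (hnp : Per n)
    (hdiv : ∀ x t, t ∈ Set.Icc (0:ℝ) T → divg (fun y => v y t) x = 0)
    (hcb : ∀ x t, t ∈ Set.Icc (0:ℝ) T → c x t ∈ Set.Icc (0:ℝ) cbar)
    (hnb : ∀ x t, t ∈ Set.Icc (0:ℝ) T → dot (n x t) (n x t) ≤ 1)
    (hgrad : ∀ t ∈ Set.Icc (0:ℝ) T,
      Real.sqrt (∫ x in Q3,
        dot (grad (fun y => Φ y t) x) (grad (fun y => Φ y t) x)) ≤ K)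
    (heq : ∀ x t, t ∈ Set.Icc (0:ℝ) T →
      deriv (fun s => c x s) t + dot (v x t) (grad (fun y => c y t) x)
        = divg (fun y => mv (matA ε (n y t))
            (grad (fun z => c z t) y + c y t • grad (fun z => Φ z t) y)) x) :
    (∫ t in (0:ℝ)..T, ∫ x in Q3,
        dot (grad (fun y => c y t) x) (grad (fun y => c y t) x))
      ≤ (∫ x in Q3, (c x 0)^2) + (1 + ε)^2 * cbar^2 * K^2 * T := by
  classical
  open Function MeasureTheory in
  -- slice smoothness and periodicity
  have hct : ∀ t, ContDiff ℝ (⊤ : ℕ∞) (fun y => c y t) := fun t => contDiff_slice hc t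
  have hΦt : ∀ t, ContDiff ℝ (⊤ : ℕ∞) (fun y => Φ y t) := fun t => contDiff_slice hΦ t
  have hvt : ∀ t, ContDiff ℝ (⊤ : ℕ∞) (fun y => v y t) := fun t => contDiff_slice hv t
  have hnt : ∀ t, ContDiff ℝ (⊤ : ℕ∞) (fun y => n y t) := fun t => contDiff_slice hn t
  have hctp : ∀ t x i, c (x + Pi.single i (2 * Real.pi)) t = c x t :=
    fun t x i => congrFun (hcp x i) t
  have hΦtp : ∀ t x i, Φ (x + Pi.single i (2 * Real.pi)) t = Φ x t :=
    fun t x i => congrFun (hΦp x i) t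
  have hvtp : ∀ t x i, v (x + Pi.single i (2 * Real.pi)) t = v x t :=
    fun t x i => congrFun (hvp x i) t
  have hntp : ∀ t x i, n (x + Pi.single i (2 * Real.pi)) t = n x t :=
    fun t x i => congrFun (hnp x i) t
  -- the flux field
  set W : ℝ → V3 → V3 := fun t y =>
    mv (matA ε (n y t)) (grad (fun z => c z t) y + c y t • grad (fun z => Φ z t) y)
    with hWdef
  have hu : ∀ t, ContDiff ℝ (⊤ : ℕ∞) (fun y =>
      grad (fun z => c z t) y + c y t • grad (fun z => Φ z t) y) := fun t =>
    (contDiff_grad (hct t)).add ((hct t).smul (contDiff_grad (hΦt t)))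
  have hW : ∀ t, ContDiff ℝ (⊤ : ℕ∞) (W t) := by
    intro t
    refine contDiff_pi.2 fun k => ?_
    have h1 : (fun y => W t y k) = fun y =>
        (grad (fun z => c z t) y + c y t • grad (fun z => Φ z t) y) k
          + ε * dot (n y t) (grad (fun z => c z t) y + c y t • grad (fun z => Φ z t) y)
            * n y t k := by
      funext y; exact mv_matA_apply ε (n y t) _ k
    rw [h1]
    have hdot : ContDiff ℝ (⊤ : ℕ∞) fun y =>
        dot (n y t) (grad (fun z => c z t) y + c y t • grad (fun z => Φ z t) y) := by
      refine ContDiff.sum fun i _ => ?_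
      exact (contDiff_pi.1 (hnt t) i).mul (contDiff_pi.1 (hu t) i)
    exact (contDiff_pi.1 (hu t) k).add
      ((contDiff_const.mul hdot).mul (contDiff_pi.1 (hnt t) k))
  have hWper : ∀ t, Per (W t) := by
    intro t x i
    have e1 : grad (fun z => c z t) (x + Pi.single i (2 * Real.pi))
        = grad (fun z => c z t) x :=
      grad_per ((hct t).differentiable (by simp)) (fun x i => hctp t x i) x i
    have e2 : grad (fun z => Φ z t) (x + Pi.single i (2 * Real.pi))
        = grad (fun z => Φ z t) x :=
      grad_per ((hΦt t).differentiable (by simp)) (fun x i => hΦtp t x i) x i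
    simp only [hWdef]
    rw [e1, e2, hntp t x i, hctp t x i]
  -- the energy and its derivative
  set E : ℝ → ℝ := fun t => ∫ x in Q3, (c x t)^2 with hEdef
  set E' : ℝ → ℝ := fun t =>
    ∫ x in Q3, 2 * c x t * fderiv ℝ (uncurry c) (x, t) (0, 1) with hE'def
  have hE : ∀ t, HasDerivAt E (E' t) t := fun t => hasDerivAt_energy hc t
  have hE'cont : Continuous E' :=
    cont_param _ ((continuous_const.mul hc.continuous).mul (cont_fderiv_apply hc (0, 1)))
  -- the gradient energy
  set G : ℝ → ℝ := fun t => ∫ x in Q3,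
    dot (grad (fun y => c y t) x) (grad (fun y => c y t) x) with hGdef
  have hGeq : G = fun t => ∫ x in Q3,
      ∑ i, (fderiv ℝ (uncurry c) (x, t) (Pi.single i 1, 0))^2 := by
    funext t
    refine MeasureTheory.integral_congr_ae (Filter.Eventually.of_forall fun x => ?_)
    simp only [dot, grad]
    exact Finset.sum_congr rfl fun i _ => by rw [pd_slice hc i x t]; ring
  have hGcont : Continuous G := by
    rw [hGeq]
    exact cont_param _ (continuous_finset_sum _ fun i _ =>
      (cont_fderiv_apply hc (Pi.single i 1, 0)).pow 2)
  -- continuity facts for slices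
  have hgc : ∀ t, Continuous (grad (fun y => c y t)) := fun t =>
    (contDiff_grad (hct t)).continuous
  have hgΦ : ∀ t, Continuous (grad (fun y => Φ y t)) := fun t =>
    (contDiff_grad (hΦt t)).continuous
  have hWc : ∀ t, Continuous (W t) := fun t => (hW t).continuous
  have hdivWc : ∀ t, Continuous (divg (W t)) := by
    intro t
    refine continuous_finset_sum _ fun i _ => ?_
    exact (contDiff_pd (contDiff_pi.1 (hW t) i) i).continuous
  -- the key slice estimate
  have hkey : ∀ t ∈ Set.Icc (0:ℝ) T, G t ≤ -E' t + (1+ε)^2 * cbar^2 * K^2 := by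
    intro t ht
    -- transport term vanishes
    have key1 : ∫ x in Q3, c x t * dot (v x t) (grad (fun y => c y t) x) = 0 := by
      have hibp := integral_ibp (fun y => c y t * c y t) (fun y => v y t)
        ((hct t).mul (hct t)) (hvt t)
        (fun x i => by simp only [hctp t x i]) (fun x i => hvtp t x i)
      have hptw : ∀ x, (c x t * c x t) * divg (fun y => v y t) x
          + dot (grad (fun y => c y t * c y t) x) (v x t)
          = 2 * (c x t * dot (v x t) (grad (fun y => c y t) x)) := by
        intro x
        rw [hdiv x t ht]
        have hgr : ∀ i, pd i (fun y => c y t * c y t) x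
            = 2 * c x t * pd i (fun y => c y t) x := by
          intro i
          rw [pd_mul (((hct t).differentiable (by simp)) x) (((hct t).differentiable (by simp)) x)]
          ring
        simp only [dot, grad, hgr, mul_zero, zero_add, Finset.mul_sum]
        exact Finset.sum_congr rfl fun i _ => by ring
      have h0 : ∫ x in Q3, 2 * (c x t * dot (v x t) (grad (fun y => c y t) x)) = 0 := by
        rw [← hibp]
        exact MeasureTheory.integral_congr_ae
          (Filter.Eventually.of_forall fun x => (hptw x).symm)
      rw [MeasureTheory.integral_const_mul] at h0
      linarith
    -- integration by parts for the flux term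
    have hint1 : MeasureTheory.IntegrableOn (fun x => c x t * divg (W t) x) Q3 :=
      (((hct t).continuous.mul (hdivWc t))).integrableOn_Icc
    have hint2 : MeasureTheory.IntegrableOn
        (fun x => dot (grad (fun y => c y t) x) (W t x)) Q3 :=
      (continuous_dot (hgc t) (hWc t)).integrableOn_Icc
    have key2 : (∫ x in Q3, c x t * divg (W t) x)
        = - ∫ x in Q3, dot (grad (fun y => c y t) x) (W t x) := by
      have hibp := integral_ibp (fun y => c y t) (W t) (hct t) (hW t)
        (fun x i => hctp t x i) (hWper t)
      rw [MeasureTheory.integral_add hint1 hint2] at hibp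
      linarith
    -- the L² bound on ∇Φ
    have hΦK : ∫ x in Q3, dot (grad (fun y => Φ y t) x) (grad (fun y => Φ y t) x)
        ≤ K^2 := by
      have hnn : 0 ≤ ∫ x in Q3,
          dot (grad (fun y => Φ y t) x) (grad (fun y => Φ y t) x) :=
        MeasureTheory.setIntegral_nonneg Q3_meas fun x _ => dot_nonneg' _
      have := hgrad t ht
      calc ∫ x in Q3, dot (grad (fun y => Φ y t) x) (grad (fun y => Φ y t) x)
          = (Real.sqrt (∫ x in Q3,
              dot (grad (fun y => Φ y t) x) (grad (fun y => Φ y t) x)))^2 :=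
            (Real.sq_sqrt hnn).symm
        _ ≤ K^2 := pow_le_pow_left₀ (Real.sqrt_nonneg _) this 2
    -- coercivity
    have hmono : (∫ x in Q3, ((1/2) * dot (grad (fun y => c y t) x) (grad (fun y => c y t) x)
          - (1/2) * (1+ε)^2 * cbar^2
            * dot (grad (fun y => Φ y t) x) (grad (fun y => Φ y t) x)))
        ≤ ∫ x in Q3, dot (grad (fun y => c y t) x) (W t x) := by
      refine MeasureTheory.setIntegral_mono_on ?_ hint2 Q3_meas fun x _ => ?_
      · exact ((continuous_const.mul (continuous_dot (hgc t) (hgc t))).sub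
          (continuous_const.mul (continuous_dot (hgΦ t) (hgΦ t)))).integrableOn_Icc
      · exact pointwise_bound ε cbar hε _ _ _ _ (hcb x t ht).1 (hcb x t ht).2 (hnb x t ht)
    have hsplit : (∫ x in Q3, ((1/2) * dot (grad (fun y => c y t) x) (grad (fun y => c y t) x)
          - (1/2) * (1+ε)^2 * cbar^2
            * dot (grad (fun y => Φ y t) x) (grad (fun y => Φ y t) x)))
        = (1/2) * G t - (1/2) * (1+ε)^2 * cbar^2
            * ∫ x in Q3, dot (grad (fun y => Φ y t) x) (grad (fun y => Φ y t) x) := by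
      rw [MeasureTheory.integral_sub, MeasureTheory.integral_const_mul]
      · congr 1
        rw [show (1/2) * (1+ε)^2 * cbar^2 = ((1/2) * (1+ε)^2 * cbar^2) from rfl]
        rw [MeasureTheory.integral_const_mul]
      · exact (continuous_const.mul (continuous_dot (hgc t) (hgc t))).integrableOn_Icc
      · exact (continuous_const.mul (continuous_dot (hgΦ t) (hgΦ t))).integrableOn_Icc
    -- the derivative identity
    have hE'eq : E' t = 2 * (∫ x in Q3, c x t * divg (W t) x)
        - 2 * ∫ x in Q3, c x t * dot (v x t) (grad (fun y => c y t) x) := by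
      have hptw : ∀ x, 2 * c x t * fderiv ℝ (uncurry c) (x, t) (0, 1)
          = 2 * (c x t * divg (W t) x)
            - 2 * (c x t * dot (v x t) (grad (fun y => c y t) x)) := by
        intro x
        have hde : fderiv ℝ (uncurry c) (x, t) (0, 1)
            = divg (W t) x - dot (v x t) (grad (fun y => c y t) x) := by
          rw [← deriv_slice hc x t]
          have := heq x t ht
          have hWt : divg (fun y => mv (matA ε (n y t))
              (grad (fun z => c z t) y + c y t • grad (fun z => Φ z t) y)) x
              = divg (W t) x := rfl
          linarith [hWt ▸ this]
        rw [hde]; ring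
      rw [hE'def]
      simp only [hptw]
      rw [MeasureTheory.integral_sub]
      · rw [MeasureTheory.integral_const_mul, MeasureTheory.integral_const_mul]
      · exact (continuous_const.mul ((hct t).continuous.mul (hdivWc t))).integrableOn_Icc
      · exact (continuous_const.mul ((hct t).continuous.mul
          (continuous_dot ((hvt t).continuous) (hgc t)))).integrableOn_Icc
    have hE'le : E' t = -2 * ∫ x in Q3, dot (grad (fun y => c y t) x) (W t x) := by
      rw [hE'eq, key1, key2]; ring
    have hfin : (1/2) * G t - (1/2) * (1+ε)^2 * cbar^2 * K^2
        ≤ ∫ x in Q3, dot (grad (fun y => c y t) x) (W t x) := by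
      have h2 : (1/2) * G t - (1/2) * (1+ε)^2 * cbar^2
            * (∫ x in Q3, dot (grad (fun y => Φ y t) x) (grad (fun y => Φ y t) x))
          ≤ ∫ x in Q3, dot (grad (fun y => c y t) x) (W t x) := by
        rw [← hsplit]; exact hmono
      have hcoef : (0:ℝ) ≤ (1/2) * (1+ε)^2 * cbar^2 := by positivity
      nlinarith [mul_le_mul_of_nonneg_left hΦK hcoef]
    rw [hE'le]
    linarith
  -- time integration
  have hETnn : 0 ≤ E T := MeasureTheory.setIntegral_nonneg Q3_meas fun x _ => sq_nonneg _
  have hFTC : ∫ t in (0:ℝ)..T, E' t = E T - E 0 :=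
    intervalIntegral.integral_eq_sub_of_hasDerivAt (fun t _ => hE t)
      (hE'cont.intervalIntegrable 0 T)
  have hmono2 : (∫ t in (0:ℝ)..T, G t)
      ≤ ∫ t in (0:ℝ)..T, (-E' t + (1+ε)^2 * cbar^2 * K^2) := by
    refine intervalIntegral.integral_mono_on hT.le (hGcont.intervalIntegrable 0 T)
      ((hE'cont.neg.add continuous_const).intervalIntegrable 0 T) hkey
  have hrhs : (∫ t in (0:ℝ)..T, (-E' t + (1+ε)^2 * cbar^2 * K^2))
      = -(E T - E 0) + (1+ε)^2 * cbar^2 * K^2 * T := by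
    rw [intervalIntegral.integral_add (f := fun t => -E' t) ((hE'cont.neg).intervalIntegrable 0 T)
      (intervalIntegrable_const)]
    rw [intervalIntegral.integral_neg, hFTC, intervalIntegral.integral_const]
    simp [smul_eq_mul]
    ring
  have : (∫ t in (0:ℝ)..T, G t) ≤ E 0 + (1+ε)^2 * cbar^2 * K^2 * T := by
    rw [hrhs] at hmono2
    linarith
  exact this
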